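/- Stabilization by the HJB feedback: let B : ℝⁿ → ℝ be continuously differentiable with B(0) = 0, B(x) > 0 for x ≠ 0, and B coercive (B(x) → ∞ as ‖x‖ → ∞); let ε : ℝⁿ → ℝ be continuous with ε(0) = 0 and ε(x) > 0 for x ≠ 0; suppose B satisfies the Hamilton–Jacobi–Bellman equation H(x, ∇B(x)) = 0 for all x ∈ ℝⁿ, and define the feedback u_B(x) = −(1/2)Q(x)⁻¹g(x)ᵀ∇B(x). Then every continuously differentiable global solution x : [0, ∞) → ℝⁿ of the closed-loop system ẋ(t) = f(x(t)) + g(x(t))u_B(x(t)) satisfies x(t) → 0 as t → ∞. -/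

import Mathlib

/-!
Along a closed-loop trajectory the HJB equation gives
`d/dt B(x t) = -ε(x t) - ⟨u_B, Q u_B⟩ ≤ -ε(x t)`, so `B` is a Lyapunov function. Hence `B(x t)`
decreases and `x t` stays in the compact sublevel set `{B ≤ B(x 0)}`. If `B(x t)` stayed above
some `β > 0`, then `ε ≥ α > 0` on the compact shell `{β ≤ B ≤ B(x 0)}` and `B(x t) ≤ B(x 0) - α t`
would eventually be negative. So `B(x t) → 0`, and since `B` vanishes only at `0`, compactness
forces `x t → 0`.
-/

open Matrix
open scoped RealInnerProductSpace

/-- Matrix–vector product landing in Euclidean space. -/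
noncomputable def mulv {n m : ℕ} (A : Matrix (Fin n) (Fin m) ℝ)
    (v : EuclideanSpace ℝ (Fin m)) : EuclideanSpace ℝ (Fin n) :=
  WithLp.toLp 2 (fun i => ∑ j, A i j * v j)

/-- The Hamiltonian `H(x,p) = ε(x) + ⟨p, f(x)⟩ − (1/4)⟨g(x)ᵀp, Q(x)⁻¹ g(x)ᵀp⟩`. -/
noncomputable def Ham {n m : ℕ} (f : EuclideanSpace ℝ (Fin n) → EuclideanSpace ℝ (Fin n))
    (g : EuclideanSpace ℝ (Fin n) → Matrix (Fin n) (Fin m) ℝ)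
    (ε : EuclideanSpace ℝ (Fin n) → ℝ)
    (Q : EuclideanSpace ℝ (Fin n) → Matrix (Fin m) (Fin m) ℝ)
    (x p : EuclideanSpace ℝ (Fin n)) : ℝ :=
  ε x + ⟪p, f x⟫ - (1 / 4 : ℝ) * ⟪mulv (g x)ᵀ p, mulv (Q x)⁻¹ (mulv (g x)ᵀ p)⟫

/-- The optimal feedback value `u*(x,p) = −(1/2) Q(x)⁻¹ g(x)ᵀ p`. -/
noncomputable def ustar {n m : ℕ}
    (g : EuclideanSpace ℝ (Fin n) → Matrix (Fin n) (Fin m) ℝ)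
    (Q : EuclideanSpace ℝ (Fin n) → Matrix (Fin m) (Fin m) ℝ)
    (x p : EuclideanSpace ℝ (Fin n)) : EuclideanSpace ℝ (Fin m) :=
  -((1 / 2 : ℝ) • mulv (Q x)⁻¹ (mulv (g x)ᵀ p))


open scoped Gradient

open Filter Topology Set

lemma mulv_eq_toLp_mulVec {n m : ℕ} (A : Matrix (Fin n) (Fin m) ℝ) (v : EuclideanSpace ℝ (Fin m)) :
    mulv A v = WithLp.toLp 2 (A *ᵥ v.ofLp) := rfl

lemma inner_mulv_eq_inner_mulv_transpose {n m : ℕ} (A : Matrix (Fin n) (Fin m) ℝ)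
    (v : EuclideanSpace ℝ (Fin n)) (u : EuclideanSpace ℝ (Fin m)) :
    ⟪v, mulv A u⟫ = ⟪mulv Aᵀ v, u⟫ := by
  simp only [mulv_eq_toLp_mulVec, EuclideanSpace.inner_eq_star_dotProduct, star_trivial,
    dotProduct_mulVec, vecMul_transpose]

lemma Matrix.PosSemidef.inner_mulv_self_nonneg {m : ℕ} {M : Matrix (Fin m) (Fin m) ℝ}
    (hM : M.PosSemidef) (w : EuclideanSpace ℝ (Fin m)) : 0 ≤ ⟪w, mulv M w⟫ := by
  simpa [mulv_eq_toLp_mulVec, EuclideanSpace.inner_eq_star_dotProduct, dotProduct_comm]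
    using hM.re_dotProduct_nonneg w.ofLp

section ClosedLoop

variable {n m : ℕ} (f : EuclideanSpace ℝ (Fin n) → EuclideanSpace ℝ (Fin n))
  (g : EuclideanSpace ℝ (Fin n) → Matrix (Fin n) (Fin m) ℝ) (ε : EuclideanSpace ℝ (Fin n) → ℝ)
  (Q : EuclideanSpace ℝ (Fin n) → Matrix (Fin m) (Fin m) ℝ) {x : EuclideanSpace ℝ (Fin n)}

lemma inner_closedLoop_eq_ham (p : EuclideanSpace ℝ (Fin n)) :
    ⟪p, f x + mulv (g x) (ustar g Q x p)⟫ = Ham f g ε Q x p - ε x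
      - (1 / 4 : ℝ) * ⟪mulv (g x)ᵀ p, mulv (Q x)⁻¹ (mulv (g x)ᵀ p)⟫ := by
  rw [inner_add_right, inner_mulv_eq_inner_mulv_transpose, ustar, inner_neg_right,
    real_inner_smul_right, Ham]
  ring

lemma inner_closedLoop_le_ham (hQ : (Q x).PosDef) (p : EuclideanSpace ℝ (Fin n)) :
    ⟪p, f x + mulv (g x) (ustar g Q x p)⟫ ≤ Ham f g ε Q x p - ε x := by
  rw [inner_closedLoop_eq_ham f g ε Q p]
  have := hQ.inv.posSemidef.inner_mulv_self_nonneg (mulv (g x)ᵀ p)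
  linarith

end ClosedLoop

lemma le_add_mul_sub_of_hasDerivWithinAt_Ici_le {φ φ' : ℝ → ℝ} {t₀ C : ℝ}
    (hφ : ∀ t ∈ Ici t₀, HasDerivWithinAt φ (φ' t) (Ici t₀) t)
    (hφ' : ∀ t ∈ Ici t₀, φ' t ≤ C) {a b : ℝ} (ha : t₀ ≤ a) (hab : a ≤ b) :
    φ b ≤ φ a + C * (b - a) := by
  have hψ : ∀ t ∈ Ici t₀,
      HasDerivWithinAt (fun s => φ s - C * s) (φ' t - C) (Ici t₀) t := fun t ht =>
    (hφ t ht).sub (by simpa using (hasDerivWithinAt_id t (Ici t₀)).const_mul C)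
  have hanti : AntitoneOn (fun s => φ s - C * s) (Ici t₀) := by
    refine antitoneOn_of_hasDerivWithinAt_nonpos (convex_Ici t₀) (f' := fun t => φ' t - C)
      (fun t ht => (hψ t ht).continuousWithinAt) (fun t ht => ?_) fun t ht => ?_
    · rw [interior_Ici] at ht ⊢
      exact (hψ t (mem_Ici_of_Ioi ht)).mono Ioi_subset_Ici_self
    · rw [interior_Ici] at ht
      linarith [hφ' t (mem_Ici_of_Ioi ht)]
  have := hanti ha (ha.trans hab) hab
  linarith

section Lyapunov

variable {X : Type*} {V W : X → ℝ} {a : X} {x : ℝ → X} {d : ℝ → ℝ}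

lemma lyapunov_comp_antitoneOn (hWa : W a = 0) (hWpos : ∀ y, y ≠ a → 0 < W y)
    (hd : ∀ t ∈ Ici (0 : ℝ), HasDerivWithinAt (fun s => V (x s)) (d t) (Ici 0) t)
    (hdW : ∀ t ∈ Ici (0 : ℝ), d t ≤ -W (x t)) : AntitoneOn (fun t => V (x t)) (Ici 0) := by
  have hWnn : ∀ y, 0 ≤ W y := fun y => by
    rcases eq_or_ne y a with rfl | hy
    exacts [hWa.ge, (hWpos y hy).le]
  intro s hs t _ hst
  simpa using le_add_mul_sub_of_hasDerivWithinAt_Ici_le hd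
    (fun t ht => (hdW t ht).trans (neg_nonpos.2 (hWnn _))) hs hst

variable [TopologicalSpace X]

lemma isCompact_sublevel_of_tendsto_cocompact (hV : Continuous V)
    (hVc : Tendsto V (cocompact X) atTop) (M : ℝ) : IsCompact {y | V y ≤ M} := by
  obtain ⟨K, hK, hsub⟩ := mem_cocompact'.1 (hVc (Ioi_mem_atTop M))
  exact hK.of_isClosed_subset (isClosed_le hV continuous_const) fun y hy => hsub (by simpa using hy)

lemma tendsto_nhds_of_tendsto_comp_nhds_zero {K : Set X} (hK : IsCompact K)
    (hV : ContinuousOn V K) (hVpos : ∀ y ∈ K, y ≠ a → 0 < V y) {ι : Type*} {l : Filter ι}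
    {y : ι → X} (hyK : ∀ᶠ i in l, y i ∈ K) (hVy : Tendsto (fun i => V (y i)) l (𝓝 0)) :
    Tendsto y l (𝓝 a) := by
  refine tendsto_nhds.2 fun U hU haU => ?_
  obtain ⟨β, hβ, hβV⟩ := (hK.diff hU).exists_forall_le' (hV.mono sdiff_subset) (a := 0)
    fun z hz => hVpos z hz.1 fun h => hz.2 (h ▸ haU)
  filter_upwards [hyK, hVy (Iio_mem_nhds hβ)] with i hiK hiβ
  by_contra hiU
  exact (hβV _ ⟨hiK, hiU⟩).not_gt hiβ

lemma tendsto_lyapunov_comp_nhds_zero (hV : Continuous V) (hVc : Tendsto V (cocompact X) atTop)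
    (hVa : V a = 0) (hVpos : ∀ y, y ≠ a → 0 < V y)
    (hW : Continuous W) (hWa : W a = 0) (hWpos : ∀ y, y ≠ a → 0 < W y)
    (hd : ∀ t ∈ Ici (0 : ℝ), HasDerivWithinAt (fun s => V (x s)) (d t) (Ici 0) t)
    (hdW : ∀ t ∈ Ici (0 : ℝ), d t ≤ -W (x t)) :
    Tendsto (fun t => V (x t)) atTop (𝓝 0) := by
  have hVnn : ∀ y, 0 ≤ V y := fun y => by
    rcases eq_or_ne y a with rfl | hy
    exacts [hVa.ge, (hVpos y hy).le]
  have hanti := lyapunov_comp_antitoneOn hWa hWpos hd hdW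
  refine tendsto_order.2 ⟨fun β hβ => .of_forall fun t => hβ.trans_le (hVnn _), fun β hβ => ?_⟩
  by_contra hfreq
  simp only [not_eventually, not_lt] at hfreq
  have hge : ∀ t, 0 ≤ t → β ≤ V (x t) := fun t ht => by
    obtain ⟨s, hsβ, hts⟩ := (hfreq.and_eventually (eventually_ge_atTop t)).exists
    exact hsβ.trans (hanti ht (ht.trans hts) hts)
  have hshell : IsCompact ({y | V y ≤ V (x 0)} ∩ {y | β ≤ V y}) :=
    (isCompact_sublevel_of_tendsto_cocompact hV hVc _).inter_right (isClosed_le continuous_const hV)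
  obtain ⟨α, hα, hαW⟩ := hshell.exists_forall_le' hW.continuousOn (a := 0)
    fun y hy => hWpos y (by rintro rfl; exact hβ.not_ge (hVa ▸ hy.2))
  have hdecay := le_add_mul_sub_of_hasDerivWithinAt_Ici_le hd
    (fun t ht => (hdW t ht).trans (neg_le_neg (hαW _ ⟨hanti self_mem_Ici ht ht, hge t ht⟩)))
    le_rfl (div_nonneg (hVnn (x 0)) hα.le)
  rw [sub_zero, neg_mul, mul_div_cancel₀ _ hα.ne'] at hdecay
  linarith [hge _ (div_nonneg (hVnn (x 0)) hα.le)]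

theorem tendsto_of_lyapunov (hV : Continuous V) (hVc : Tendsto V (cocompact X) atTop)
    (hVa : V a = 0) (hVpos : ∀ y, y ≠ a → 0 < V y)
    (hW : Continuous W) (hWa : W a = 0) (hWpos : ∀ y, y ≠ a → 0 < W y)
    (hd : ∀ t ∈ Ici (0 : ℝ), HasDerivWithinAt (fun s => V (x s)) (d t) (Ici 0) t)
    (hdW : ∀ t ∈ Ici (0 : ℝ), d t ≤ -W (x t)) :
    Tendsto x atTop (𝓝 a) :=
  tendsto_nhds_of_tendsto_comp_nhds_zero (isCompact_sublevel_of_tendsto_cocompact hV hVc (V (x 0)))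
    hV.continuousOn (fun y _ => hVpos y)
    ((eventually_ge_atTop 0).mono fun _ ht =>
      lyapunov_comp_antitoneOn hWa hWpos hd hdW self_mem_Ici ht ht)
    (tendsto_lyapunov_comp_nhds_zero hV hVc hVa hVpos hW hWa hWpos hd hdW)

end Lyapunov

theorem stabilization_by_HJB_feedback_general {n m : ℕ}
    (f : EuclideanSpace ℝ (Fin n) → EuclideanSpace ℝ (Fin n))
    (g : EuclideanSpace ℝ (Fin n) → Matrix (Fin n) (Fin m) ℝ)
    (ε : EuclideanSpace ℝ (Fin n) → ℝ) (hε : Continuous ε)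
    (Q : EuclideanSpace ℝ (Fin n) → Matrix (Fin m) (Fin m) ℝ)
    (hQ : ∀ x, (Q x).PosDef)
    (B : EuclideanSpace ℝ (Fin n) → ℝ) (hB : ContDiff ℝ 1 B)
    (hB0 : B 0 = 0) (hBpos : ∀ y, y ≠ 0 → 0 < B y)
    (hBcoercive : Filter.Tendsto B (Filter.cocompact (EuclideanSpace ℝ (Fin n))) Filter.atTop)
    (hε0 : ε 0 = 0) (hεpos : ∀ y, y ≠ 0 → 0 < ε y)
    (hHJB : ∀ x, Ham f g ε Q x (∇ B x) = 0)
    (uB : EuclideanSpace ℝ (Fin n) → EuclideanSpace ℝ (Fin m))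
    (huB : ∀ x, uB x = ustar g Q x (∇ B x))
    (x : ℝ → EuclideanSpace ℝ (Fin n))
    (hx : ∀ t ∈ Set.Ici (0 : ℝ),
      HasDerivWithinAt x (f (x t) + mulv (g (x t)) (uB (x t))) (Set.Ici 0) t) :
    Filter.Tendsto x Filter.atTop (nhds 0) := by
  have hBdiff : Differentiable ℝ B := hB.differentiable one_ne_zero
  refine tendsto_of_lyapunov hB.continuous hBcoercive hB0 hBpos hε hε0 hεpos
    (d := fun t => ⟪∇ B (x t), f (x t) + mulv (g (x t)) (uB (x t))⟫) (fun t ht => ?_) fun t _ => ?_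
  · have := (hBdiff (x t)).hasGradientAt.hasFDerivAt.comp_hasDerivWithinAt t (hx t ht)
    rwa [InnerProductSpace.toDual_apply_apply] at this
  · simpa [huB, hHJB] using inner_closedLoop_le_ham f g ε Q (hQ (x t)) (∇ B (x t))

/-- stabilization by the HJB feedback.  If `B` is a `C¹`, positive
definite, coercive solution of the HJB equation `H(x, ∇B(x)) = 0`, then every
global `C¹` solution of the closed-loop system
`ẋ = f(x) + g(x)u_B(x)`, `u_B(x) = −(1/2)Q(x)⁻¹g(x)ᵀ∇B(x)`, tends to `0`. -/
theorem stabilization_by_HJB_feedback {n m : ℕ} (hn : 0 < n) (hm : 0 < m)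
    (f : EuclideanSpace ℝ (Fin n) → EuclideanSpace ℝ (Fin n)) (hf : Continuous f)
    (g : EuclideanSpace ℝ (Fin n) → Matrix (Fin n) (Fin m) ℝ) (hg : Continuous g)
    (ε : EuclideanSpace ℝ (Fin n) → ℝ) (hε : Continuous ε)
    (Q : EuclideanSpace ℝ (Fin n) → Matrix (Fin m) (Fin m) ℝ) (hQc : Continuous Q)
    (hQ : ∀ x, (Q x).PosDef)
    (B : EuclideanSpace ℝ (Fin n) → ℝ) (hB : ContDiff ℝ 1 B)
    (hB0 : B 0 = 0) (hBpos : ∀ y, y ≠ 0 → 0 < B y)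
    (hBcoercive : Filter.Tendsto B (Filter.cocompact (EuclideanSpace ℝ (Fin n))) Filter.atTop)
    (hε0 : ε 0 = 0) (hεpos : ∀ y, y ≠ 0 → 0 < ε y)
    (hHJB : ∀ x, Ham f g ε Q x (∇ B x) = 0)
    (uB : EuclideanSpace ℝ (Fin n) → EuclideanSpace ℝ (Fin m))
    (huB : ∀ x, uB x = ustar g Q x (∇ B x))
    (x : ℝ → EuclideanSpace ℝ (Fin n))
    (hx : ∀ t ∈ Set.Ici (0 : ℝ),
      HasDerivWithinAt x (f (x t) + mulv (g (x t)) (uB (x t))) (Set.Ici 0) t) :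
    Filter.Tendsto x Filter.atTop (nhds 0) :=
  stabilization_by_HJB_feedback_general f g ε hε Q hQ B hB hB0 hBpos hBcoercive hε0 hεpos hHJB uB
    huB x hx
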